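/- arXiv:1508.05565 — 2 statements merged into one kernel-verified Lean document; each statement's English description precedes it below -/
import Mathlib

section
/- There exists a K×K matrix (for some K ≥ 4) that is simplicial but not affine-independent; concretely, the 4×4 matrix with rows (1,0,0.5,0.5), (0,1,0.5,0.5), (0.5,0.5,1,0), (0.5,0.5,0,1) is simplicial (each row lies outside the convex hull of the other rows) but the signed combination with coefficients (1,1,−1,−1), which sum to zero, of the rows equals the zero vector, so it is not affine-independent. -/
/-!
Row `i` has `i`-th coordinate `1`, while every other row has `i`-th coordinate at most `1/2`;
since the half-space `{y | y i ≤ 1/2}` is convex, no convex combination of the other rows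
reaches row `i`. The rows `0, 1` and `2, 3` have the same sum, which gives the affine dependence.
-/

open Finset

theorem sub_sum_smul_ne_zero_of_apply_le_of_lt {𝕜 E ι : Type*} [Field 𝕜] [LinearOrder 𝕜]
    [IsStrictOrderedRing 𝕜] [AddCommGroup E] [Module 𝕜 E] (f : E →ₗ[𝕜] 𝕜) {s : Finset ι}
    {v : ι → E} {c : ι → 𝕜} {x : E} {a : 𝕜} (hc : ∀ j ∈ s, 0 ≤ c j) (hc₁ : ∑ j ∈ s, c j = 1)
    (hv : ∀ j ∈ s, f (v j) ≤ a) (hx : a < f x) : x - ∑ j ∈ s, c j • v j ≠ 0 := by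
  have hcomb : f (∑ j ∈ s, c j • v j) ≤ a :=
    (convex_halfSpace_le f.isLinear a).sum_mem hc hc₁ hv
  rw [sub_ne_zero]
  rintro rfl
  exact (hcomb.trans_lt hx).false

def exampleRows : Fin 4 → Fin 4 → ℝ :=
  ![![1, 0, 0.5, 0.5], ![0, 1, 0.5, 0.5], ![0.5, 0.5, 1, 0], ![0.5, 0.5, 0, 1]]

theorem exampleRows_self (i : Fin 4) : exampleRows i i = 1 := by
  fin_cases i <;> simp [exampleRows]

theorem exampleRows_le_of_ne {i j : Fin 4} (h : j ≠ i) : exampleRows j i ≤ 0.5 := by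
  revert h
  fin_cases i <;> fin_cases j <;> norm_num [exampleRows]

theorem sum_smul_exampleRows : ∑ k, ![(1 : ℝ), 1, -1, -1] k • exampleRows k = 0 := by
  ext j
  fin_cases j <;>
    norm_num [Fin.sum_univ_four, exampleRows, Matrix.cons_val_two, Matrix.cons_val_three]

/-- The 4×4 matrix with rows (1,0,0.5,0.5), (0,1,0.5,0.5), (0.5,0.5,1,0), (0.5,0.5,0,1)
is simplicial (every row lies strictly outside the convex hull of the other rows) but
not affine-independent: the coefficients (1,1,-1,-1), which sum to zero, give the zero
combination of the rows. -/
theorem simplicial_not_affine_independent_example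
    (B : Fin 4 → EuclideanSpace ℝ (Fin 4))
    (hB : B = fun i => (WithLp.toLp 2 (![![(1:ℝ), 0, 0.5, 0.5], ![0, 1, 0.5, 0.5],
        ![0.5, 0.5, 1, 0], ![0.5, 0.5, 0, 1]] i) : EuclideanSpace ℝ (Fin 4))) :
    -- simplicial: each row is at strictly positive distance from the convex hull
    -- of the remaining rows
    (∀ i : Fin 4, ∀ c : Fin 4 → ℝ, (∀ j, 0 ≤ c j) →
      ∑ j ∈ Finset.univ.erase i, c j = 1 →
      0 < ‖B i - ∑ j ∈ Finset.univ.erase i, c j • B j‖) ∧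
    -- not affine-independent, witnessed by λ = (1,1,-1,-1)
    (∃ l : Fin 4 → ℝ, l ≠ 0 ∧ ∑ k, l k = 0 ∧ ∑ k, l k • B k = 0 ∧
      l = ![1, 1, -1, -1]) := by
  change B = fun i => WithLp.toLp 2 (exampleRows i) at hB
  subst hB
  refine ⟨fun i c hc hc₁ => norm_pos_iff.mpr ?_, ![1, 1, -1, -1], ?_, ?_, ?_, rfl⟩
  · refine sub_sum_smul_ne_zero_of_apply_le_of_lt (EuclideanSpace.proj i).toLinearMap
      (fun j _ => hc j) hc₁ (fun j hj => exampleRows_le_of_ne (ne_of_mem_erase hj)) ?_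
    norm_num [exampleRows_self]
  · exact fun h => one_ne_zero (congrFun h 0)
  · norm_num [Fin.sum_univ_four, Matrix.cons_val_two, Matrix.cons_val_three]
  · rw [← WithLp.toLp_zero 2, ← sum_smul_exampleRows]
    simp
end

section
/- A finite collection of nonzero measures ν_1,…,ν_K on a measurable space (𝒳, ℱ) is irreducible if and only if it is separable. Irreducible means: whenever c ∈ ℝ^K satisfies ∑_k c_k ν_k(A) ≥ 0 for all A ∈ ℱ, then c_k ≥ 0 for all k. Separable means: for each k, inf over A ∈ ℱ with ν_k(A) > 0 of max_{j≠k} ν_j(A)/ν_k(A) equals 0. -/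
open MeasureTheory

/-- A finite collection of nonzero (finite) measures is irreducible (only nonnegative
linear combinations are nonnegative on all measurable sets) if and only if it is
separable (for each `k`, the infimum over measurable `A` with `ν k A > 0` of
`max_{j ≠ k} ν j A / ν k A` is zero). -/
theorem irreducible_iff_separable
    {X : Type*} [MeasurableSpace X] {K : ℕ} (hK : 2 ≤ K)
    (ν : Fin K → Measure X) [∀ k, IsFiniteMeasure (ν k)]
    (hne : ∀ k, ν k ≠ 0) :
    (∀ c : Fin K → ℝ,
        (∀ A : Set X, MeasurableSet A → 0 ≤ ∑ k, c k * (ν k A).toReal) →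
        ∀ k, 0 ≤ c k) ↔
    (∀ k : Fin K, ∀ ε > (0:ℝ), ∃ A : Set X, MeasurableSet A ∧ 0 < ν k A ∧
        ∀ j, j ≠ k → (ν j A).toReal < ε * (ν k A).toReal) := by
  constructor
  · -- irreducible → separable
    intro hirr
    by_contra h
    push_neg at h
    obtain ⟨k, ε, hε, hA⟩ := h
    have hkey := hirr (fun j => if j = k then -ε else 1) ?_ k
    · simp only [if_pos rfl] at hkey; simp only [if_true] at hkey; linarith
    · intro A hAm
      have hx : ∀ j, 0 ≤ (ν j A).toReal := fun j => ENNReal.toReal_nonneg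
      rw [Fintype.sum_eq_add_sum_compl k]
      beta_reduce
      rw [if_pos rfl]
      have hrest : ∀ j ∈ ({k}ᶜ : Finset (Fin K)),
          (if j = k then -ε else 1) * (ν j A).toReal = (ν j A).toReal := by
        intro j hj
        simp only [Finset.mem_compl, Finset.mem_singleton] at hj
        simp [hj]
      rw [Finset.sum_congr rfl hrest]
      rcases eq_or_lt_of_le (zero_le : 0 ≤ ν k A) with h0 | h0
      · have hz : (ν k A).toReal = 0 := by rw [← h0]; simp
        rw [hz]
        simpa using Finset.sum_nonneg fun j _ => hx j
      · obtain ⟨j0, hj0k, hj0⟩ := hA A hAm h0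
        have hmem : j0 ∈ ({k}ᶜ : Finset (Fin K)) := by simp [hj0k]
        have hle := Finset.single_le_sum
          (f := fun j => (ν j A).toReal) (fun j _ => hx j) hmem
        linarith
  · -- separable → irreducible
    intro hsep c hc k
    by_contra hck
    push_neg at hck
    set M := ∑ j, |c j| with hM
    have hMpos : 0 < M := by
      have h1 : 0 < |c k| := abs_pos.mpr (ne_of_lt hck)
      have h2 : |c k| ≤ M := by
        rw [hM]
        exact Finset.single_le_sum (f := fun j => |c j|) (fun j _ => abs_nonneg _)
          (Finset.mem_univ k)
      linarith
    have hnck : 0 < -c k := neg_pos.mpr hck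
    have hεpos : 0 < -c k / (2 * M) := div_pos hnck (by linarith)
    obtain ⟨A, hAm, hApos, hAj⟩ := hsep k (-c k / (2 * M)) hεpos
    have hxk : 0 < (ν k A).toReal :=
      ENNReal.toReal_pos hApos.ne' (measure_ne_top _ _)
    have hsum := hc A hAm
    rw [Fintype.sum_eq_add_sum_compl k] at hsum
    have hbound : ∀ j ∈ ({k}ᶜ : Finset (Fin K)),
        c j * (ν j A).toReal ≤ |c j| * ((-c k / (2 * M)) * (ν k A).toReal) := by
      intro j hj
      have hjk : j ≠ k := by simpa using hj
      have h1 : c j * (ν j A).toReal ≤ |c j| * (ν j A).toReal :=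
        mul_le_mul_of_nonneg_right (le_abs_self _) ENNReal.toReal_nonneg
      have h2 : (ν j A).toReal ≤ (-c k / (2 * M)) * (ν k A).toReal := (hAj j hjk).le
      calc c j * (ν j A).toReal ≤ |c j| * (ν j A).toReal := h1
        _ ≤ |c j| * ((-c k / (2 * M)) * (ν k A).toReal) :=
          mul_le_mul_of_nonneg_left h2 (abs_nonneg _)
    have hS : ∑ j ∈ ({k}ᶜ : Finset (Fin K)), c j * (ν j A).toReal ≤
        (∑ j ∈ ({k}ᶜ : Finset (Fin K)), |c j|) * ((-c k / (2 * M)) * (ν k A).toReal) := by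
      rw [Finset.sum_mul]
      exact Finset.sum_le_sum hbound
    have hMle : ∑ j ∈ ({k}ᶜ : Finset (Fin K)), |c j| ≤ M := by
      rw [hM]
      exact Finset.sum_le_sum_of_subset_of_nonneg (Finset.subset_univ _)
        (fun j _ _ => abs_nonneg _)
    have hfin : (∑ j ∈ ({k}ᶜ : Finset (Fin K)), |c j|) * ((-c k / (2 * M)) * (ν k A).toReal)
        ≤ M * ((-c k / (2 * M)) * (ν k A).toReal) := by
      apply mul_le_mul_of_nonneg_right hMle
      exact mul_nonneg hεpos.le hxk.le
    have heq : M * ((-c k / (2 * M)) * (ν k A).toReal) = (-c k / 2) * (ν k A).toReal := by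
      field_simp
    nlinarith [mul_pos hnck hxk]
end
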